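/- Let $Z \in \mathbb{R}^{m \times n}$ and suppose $Z = U \Sigma V^{\top}$ is a singular value decomposition of $Z$, where $U \in \mathbb{R}^{m \times l}$ and $V \in \mathbb{R}^{n \times l}$ have orthonormal columns ($U^{\top}U = I_l$, $V^{\top}V = I_l$) and $\Sigma = \mathrm{diag}(\sigma_1, \dots, \sigma_l)$ with $\sigma_i > 0$ for all $i$ (so $Z$ has rank $l$). For $\lambda > 0$, define the singular value thresholding operator $\mathcal{D}_{\lambda}(Z) := U \, \mathrm{diag}\big((\sigma_1 - \lambda)_+, \dots, (\sigma_l - \lambda)_+\big) V^{\top}$, where $(\sigma - \lambda)_+ = \max(0, \sigma - \lambda)$. Then $\mathcal{D}_{\lambda}(Z)$ is the unique minimizer over $X \in \mathbb{R}^{m \times n}$ of the function $X \mapsto \|X\|_* + \frac{1}{2\lambda}\|X - Z\|_F^2$; that is, $\mathcal{D}_{\lambda}(Z) = \mathrm{prox}_{\lambda \|\cdot\|_*}(Z)$. -/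

import Mathlib

open Matrix Finset

/-- The nuclear norm of a real matrix: the sum of its singular values,
i.e. the square roots of the eigenvalues of `Xᵀ * X`. -/
noncomputable def nuclearNorm {m n : ℕ} (X : Matrix (Fin m) (Fin n) ℝ) : ℝ :=
  ∑ i, Real.sqrt ((Matrix.isHermitian_conjTranspose_mul_self X).eigenvalues i)

namespace SVTAux

lemma dot_le_sqrt {m : ℕ} (a b : Fin m → ℝ) :
    a ⬝ᵥ b ≤ Real.sqrt (a ⬝ᵥ a) * Real.sqrt (b ⬝ᵥ b) := by
  have h := Finset.sum_mul_sq_le_sq_mul_sq Finset.univ a b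
  have ha : a ⬝ᵥ a = ∑ i, a i ^ 2 := by simp [dotProduct, sq]
  have hb : b ⬝ᵥ b = ∑ i, b i ^ 2 := by simp [dotProduct, sq]
  have hab : a ⬝ᵥ b = ∑ i, a i * b i := rfl
  calc a ⬝ᵥ b ≤ Real.sqrt ((a ⬝ᵥ b) ^ 2) := by
        rw [Real.sqrt_sq_eq_abs]; exact le_abs_self _
    _ ≤ Real.sqrt ((∑ i, a i ^ 2) * (∑ i, b i ^ 2)) :=
        Real.sqrt_le_sqrt (by rw [hab]; exact h)
    _ = _ := by rw [Real.sqrt_mul (by positivity), ha, hb]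

lemma dot_self_nonneg {m : ℕ} (a : Fin m → ℝ) : 0 ≤ a ⬝ᵥ a :=
  Finset.sum_nonneg fun _ _ => mul_self_nonneg _

lemma spectral_stuff {n : ℕ} (A : Matrix (Fin n) (Fin n) ℝ) (hA : A.IsHermitian) :
    ∃ Q : Matrix (Fin n) (Fin n) ℝ, Qᵀ * Q = 1 ∧ Q * Qᵀ = 1 ∧
      A = Q * diagonal hA.eigenvalues * Qᵀ := by
  refine ⟨(hA.eigenvectorUnitary : Matrix (Fin n) (Fin n) ℝ), ?_, ?_, ?_⟩
  · rw [← conjTranspose_eq_transpose_of_trivial, ← star_eq_conjTranspose]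
    exact mem_unitaryGroup_iff'.mp hA.eigenvectorUnitary.2
  · rw [← conjTranspose_eq_transpose_of_trivial, ← star_eq_conjTranspose]
    exact mem_unitaryGroup_iff.mp hA.eigenvectorUnitary.2
  · have h := hA.spectral_theorem
    rw [← conjTranspose_eq_transpose_of_trivial, ← star_eq_conjTranspose]
    refine h.trans ?_
    simp [Unitary.conjStarAlgAut_apply]

lemma col_mul {m n k : ℕ} (A : Matrix (Fin m) (Fin n) ℝ) (B : Matrix (Fin n) (Fin k) ℝ)
    (j : Fin k) : (fun i => (A * B) i j) = A *ᵥ (fun i => B i j) := by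
  funext i; simp [mul_apply, mulVec, dotProduct]

lemma entry_transpose_mul {m n : ℕ} (A B : Matrix (Fin m) (Fin n) ℝ) (j j' : Fin n) :
    (Aᵀ * B) j j' = (fun i => A i j) ⬝ᵥ (fun i => B i j') := by
  simp [mul_apply, dotProduct, transpose_apply]

lemma trace_transpose_mul_eq {m n : ℕ} (A B : Matrix (Fin m) (Fin n) ℝ) :
    trace (Aᵀ * B) = ∑ j, (fun i => A i j) ⬝ᵥ (fun i => B i j) := by
  unfold trace
  exact Finset.sum_congr rfl fun j _ => entry_transpose_mul A B j j

lemma sand {m n l : ℕ} (U : Matrix (Fin m) (Fin l) ℝ) (V : Matrix (Fin n) (Fin l) ℝ)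
    (hU : Uᵀ * U = 1) (a b : Fin l → ℝ) :
    (U * diagonal a * Vᵀ)ᵀ * (U * diagonal b * Vᵀ)
      = V * diagonal (fun i => a i * b i) * Vᵀ := by
  have h1 : (U * diagonal a * Vᵀ)ᵀ = V * diagonal a * Uᵀ := by
    simp [transpose_mul, diagonal_transpose, Matrix.mul_assoc]
  rw [h1]
  have h2 : V * diagonal a * Uᵀ * (U * diagonal b * Vᵀ)
      = V * (diagonal a * ((Uᵀ * U) * (diagonal b * Vᵀ))) := by
    simp only [Matrix.mul_assoc]
  rw [h2, hU, Matrix.one_mul, ← Matrix.mul_assoc, ← Matrix.mul_assoc,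
    Matrix.mul_assoc V (diagonal a) (diagonal b), diagonal_mul_diagonal]

lemma sand_transpose {n l : ℕ} (W : Matrix (Fin n) (Fin l) ℝ) (a : Fin l → ℝ) :
    (W * diagonal a * Wᵀ)ᵀ = W * diagonal a * Wᵀ := by
  simp [transpose_mul, diagonal_transpose, Matrix.mul_assoc]

lemma sandmul {n l : ℕ} (W : Matrix (Fin n) (Fin l) ℝ) (hW : Wᵀ * W = 1) (a b : Fin l → ℝ) :
    (W * diagonal a * Wᵀ) * (W * diagonal b * Wᵀ)
      = W * diagonal (fun i => a i * b i) * Wᵀ := by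
  conv_lhs => rw [← sand_transpose W a]
  exact sand W W hW a b

lemma trace_sand {n l : ℕ} (V : Matrix (Fin n) (Fin l) ℝ) (hV : Vᵀ * V = 1)
    (c : Fin l → ℝ) : trace (V * diagonal c * Vᵀ) = ∑ i, c i := by
  rw [Matrix.mul_assoc, trace_mul_comm, Matrix.mul_assoc, hV, Matrix.mul_one,
    trace_diagonal]

lemma trace_pair {m n l : ℕ} (U : Matrix (Fin m) (Fin l) ℝ) (V : Matrix (Fin n) (Fin l) ℝ)
    (hU : Uᵀ * U = 1) (hV : Vᵀ * V = 1) (a b : Fin l → ℝ) :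
    trace ((U * diagonal a * Vᵀ)ᵀ * (U * diagonal b * Vᵀ)) = ∑ i, a i * b i := by
  rw [sand U V hU a b, trace_sand V hV]

lemma mu_nonneg {m n : ℕ} (X : Matrix (Fin m) (Fin n) ℝ) (j : Fin n) :
    0 ≤ (Matrix.isHermitian_conjTranspose_mul_self X).eigenvalues j := by
  have hpsd := posSemidef_conjTranspose_mul_self X
  exact hpsd.eigenvalues_nonneg j

lemma quad_le {n l : ℕ} (W : Matrix (Fin n) (Fin l) ℝ) (hW : Wᵀ * W = 1)
    (c : Fin l → ℝ) (hc0 : ∀ i, 0 ≤ c i) (hc1 : ∀ i, c i ≤ 1)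
    (x : Fin n → ℝ) :
    x ⬝ᵥ ((W * diagonal c * Wᵀ) *ᵥ x) ≤ x ⬝ᵥ x := by
  set y := Wᵀ *ᵥ x with hy
  have h1 : x ⬝ᵥ ((W * diagonal c * Wᵀ) *ᵥ x) = y ⬝ᵥ (diagonal c *ᵥ y) := by
    rw [← mulVec_mulVec, ← mulVec_mulVec, dotProduct_mulVec x, ← mulVec_transpose, hy]
  have h2 : y ⬝ᵥ (diagonal c *ᵥ y) ≤ y ⬝ᵥ y := by
    unfold dotProduct
    refine Finset.sum_le_sum fun i _ => ?_
    rw [mulVec_diagonal]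
    rcases le_or_gt 0 (y i) with h | h
    · nlinarith [hc0 i, hc1 i]
    · nlinarith [hc0 i, hc1 i]
  have h3 : y ⬝ᵥ y ≤ x ⬝ᵥ x := by
    set p := W *ᵥ y with hp
    have hxp : x ⬝ᵥ p = y ⬝ᵥ y := by
      rw [hp, dotProduct_mulVec x, ← mulVec_transpose, ← hy]
    have hpp : p ⬝ᵥ p = y ⬝ᵥ y := by
      rw [hp, dotProduct_mulVec, ← mulVec_transpose, mulVec_mulVec, hW, one_mulVec]
    have h4 : 0 ≤ (x - p) ⬝ᵥ (x - p) := dot_self_nonneg _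
    have h5 : (x - p) ⬝ᵥ (x - p) = x ⬝ᵥ x - 2 * (x ⬝ᵥ p) + p ⬝ᵥ p := by
      simp only [sub_dotProduct, dotProduct_sub]
      rw [dotProduct_comm p x]; ring
    rw [h5, hxp, hpp] at h4; linarith
  linarith [h1 ▸ le_trans h2 h3]

/-- Contraction property from `GᵀG = W diag(c) Wᵀ`. -/

lemma con_of {m n l : ℕ} (G : Matrix (Fin m) (Fin n) ℝ)
    (W : Matrix (Fin n) (Fin l) ℝ) (hW : Wᵀ * W = 1)
    (c : Fin l → ℝ) (hc0 : ∀ i, 0 ≤ c i) (hc1 : ∀ i, c i ≤ 1)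
    (h : Gᵀ * G = W * diagonal c * Wᵀ) (x : Fin n → ℝ) :
    (G *ᵥ x) ⬝ᵥ (G *ᵥ x) ≤ x ⬝ᵥ x := by
  have h1 : (G *ᵥ x) ⬝ᵥ (G *ᵥ x) = x ⬝ᵥ ((Gᵀ * G) *ᵥ x) := by
    rw [← mulVec_mulVec, dotProduct_mulVec x, ← mulVec_transpose, transpose_transpose]
  rw [h1, h]
  exact quad_le W hW c hc0 hc1 x


/-- Dual inequality: a contraction pairs below the nuclear norm. -/
lemma trace_le_nuclear {m n : ℕ} (X G : Matrix (Fin m) (Fin n) ℝ)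
    (hG : ∀ x : Fin n → ℝ, (G *ᵥ x) ⬝ᵥ (G *ᵥ x) ≤ x ⬝ᵥ x) :
    trace (Gᵀ * X) ≤ nuclearNorm X := by
  set μ := (Matrix.isHermitian_conjTranspose_mul_self X).eigenvalues with hμdef
  obtain ⟨Q, hQ1, hQ2, hspec0⟩ := spectral_stuff _ (Matrix.isHermitian_conjTranspose_mul_self X)
  have hct : Xᵀ * X = Xᴴ * X := by rw [conjTranspose_eq_transpose_of_trivial]
  have hspec : Xᵀ * X = Q * diagonal μ * Qᵀ := hct.trans hspec0
  have e1 : trace (Gᵀ * X) = trace ((G * Q)ᵀ * (X * Q)) := by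
    calc trace (Gᵀ * X) = trace ((Gᵀ * X) * 1) := by rw [Matrix.mul_one]
      _ = trace ((Gᵀ * X) * (Q * Qᵀ)) := by rw [hQ2]
      _ = trace (((Gᵀ * X) * Q) * Qᵀ) := by rw [← Matrix.mul_assoc]
      _ = trace (Qᵀ * ((Gᵀ * X) * Q)) := trace_mul_comm _ _
      _ = trace ((G * Q)ᵀ * (X * Q)) := by
          rw [transpose_mul]; simp only [Matrix.mul_assoc]
  have hdiag : (X * Q)ᵀ * (X * Q) = diagonal μ := by
    rw [transpose_mul]
    have h3 : Qᵀ * Xᵀ * (X * Q) = Qᵀ * (Xᵀ * X) * Q := by simp only [Matrix.mul_assoc]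
    rw [h3, hspec]
    have h4 : Qᵀ * (Q * diagonal μ * Qᵀ) * Q = (Qᵀ * Q) * diagonal μ * (Qᵀ * Q) := by
      simp only [Matrix.mul_assoc]
    rw [h4, hQ1, Matrix.one_mul, Matrix.mul_one]
  rw [e1, trace_transpose_mul_eq]
  have hbound : ∀ j, (fun i => (G * Q) i j) ⬝ᵥ (fun i => (X * Q) i j) ≤ Real.sqrt (μ j) := by
    intro j
    rw [col_mul, col_mul]
    set q : Fin n → ℝ := fun i => Q i j with hq
    have hq1 : q ⬝ᵥ q = 1 := by
      rw [hq, ← entry_transpose_mul Q Q j j, hQ1, one_apply_eq]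
    have hXq : (X *ᵥ q) ⬝ᵥ (X *ᵥ q) = μ j := by
      rw [hq, ← col_mul, ← entry_transpose_mul, hdiag, diagonal_apply_eq]
    calc (G *ᵥ q) ⬝ᵥ (X *ᵥ q)
        ≤ Real.sqrt ((G *ᵥ q) ⬝ᵥ (G *ᵥ q)) * Real.sqrt ((X *ᵥ q) ⬝ᵥ (X *ᵥ q)) :=
          dot_le_sqrt _ _
      _ ≤ 1 * Real.sqrt (μ j) := by
          rw [hXq]
          refine mul_le_mul_of_nonneg_right ?_ (Real.sqrt_nonneg _)
          calc Real.sqrt ((G *ᵥ q) ⬝ᵥ (G *ᵥ q)) ≤ Real.sqrt (q ⬝ᵥ q) :=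
                Real.sqrt_le_sqrt (hG q)
            _ = 1 := by rw [hq1, Real.sqrt_one]
      _ = Real.sqrt (μ j) := one_mul _
  exact Finset.sum_le_sum fun j _ => hbound j

/-- The dual pairing is attained by a contraction. -/
lemma exists_dual {m n : ℕ} (X : Matrix (Fin m) (Fin n) ℝ) :
    ∃ G : Matrix (Fin m) (Fin n) ℝ,
      (∀ x : Fin n → ℝ, (G *ᵥ x) ⬝ᵥ (G *ᵥ x) ≤ x ⬝ᵥ x) ∧
      trace (Gᵀ * X) = nuclearNorm X := by
  set μ := (Matrix.isHermitian_conjTranspose_mul_self X).eigenvalues with hμdef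
  obtain ⟨Q, hQ1, hQ2, hspec0⟩ := spectral_stuff _ (Matrix.isHermitian_conjTranspose_mul_self X)
  have hct : Xᵀ * X = Xᴴ * X := by rw [conjTranspose_eq_transpose_of_trivial]
  have hspec : Xᵀ * X = Q * diagonal μ * Qᵀ := hct.trans hspec0
  have hμ : ∀ j, 0 ≤ μ j := mu_nonneg X
  set r : Fin n → ℝ := fun j => if μ j = 0 then 0 else (Real.sqrt (μ j))⁻¹ with hr
  have hrμ : ∀ j, r j * μ j = Real.sqrt (μ j) := by
    intro j
    rcases eq_or_ne (μ j) 0 with h | h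
    · simp [hr, h]
    · have hpos : 0 < μ j := lt_of_le_of_ne (hμ j) (Ne.symm h)
      have hs : 0 < Real.sqrt (μ j) := Real.sqrt_pos.2 hpos
      rw [hr]; simp only [if_neg h]
      rw [inv_mul_eq_div, eq_comm, eq_div_iff hs.ne', Real.mul_self_sqrt (hμ j)]
  set M : Matrix (Fin n) (Fin n) ℝ := Q * diagonal r * Qᵀ with hM
  have hGt : (X * M)ᵀ * (X * M) = M * (Xᵀ * X) * M := by
    rw [transpose_mul, hM, sand_transpose]; simp only [Matrix.mul_assoc]
  have hc : (X * M)ᵀ * (X * M)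
      = Q * diagonal (fun j => r j * μ j * r j) * Qᵀ := by
    rw [hGt, hspec, hM, sandmul Q hQ1 r μ, sandmul Q hQ1 (fun i => r i * μ i) r]
  refine ⟨X * M, ?_, ?_⟩
  · -- contraction, via con_of
    refine con_of (X * M) Q hQ1 _ (fun j => ?_) (fun j => ?_) hc
    · rcases eq_or_ne (μ j) 0 with h | h
      · simp [hr, h]
      · have hpos : 0 < μ j := lt_of_le_of_ne (hμ j) (Ne.symm h)
        have hs : 0 < Real.sqrt (μ j) := Real.sqrt_pos.2 hpos
        have h0 : 0 ≤ r j := by rw [hr]; simp only [if_neg h]; positivity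
        exact mul_nonneg (mul_nonneg h0 (hμ j)) h0
    · have : r j * μ j * r j = Real.sqrt (μ j) * r j := by rw [hrμ j]
      rw [this]
      rcases eq_or_ne (μ j) 0 with h | h
      · simp [hr, h]
      · have hpos : 0 < μ j := lt_of_le_of_ne (hμ j) (Ne.symm h)
        have hs : 0 < Real.sqrt (μ j) := Real.sqrt_pos.2 hpos
        rw [hr]; simp only [if_neg h]
        rw [mul_inv_cancel₀ hs.ne']
  · -- trace value
    have e1 : trace ((X * M)ᵀ * X) = trace (M * (Xᵀ * X)) := by
      rw [transpose_mul, hM, sand_transpose, Matrix.mul_assoc]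
    rw [e1, hspec, hM, sandmul Q hQ1 r μ, trace_sand Q hQ1]
    unfold nuclearNorm
    exact Finset.sum_congr rfl fun j _ => hrμ j

lemma trace_symm {m n : ℕ} (A B : Matrix (Fin m) (Fin n) ℝ) :
    trace (Aᵀ * B) = trace (Bᵀ * A) := by
  rw [← Matrix.trace_transpose (Bᵀ * A), transpose_mul, transpose_transpose]

lemma frob_expand {m n : ℕ} (A B : Matrix (Fin m) (Fin n) ℝ) :
    trace ((A + B)ᵀ * (A + B))
      = trace (Aᵀ * A) + 2 * trace (Aᵀ * B) + trace (Bᵀ * B) := by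
  rw [transpose_add, Matrix.add_mul, Matrix.mul_add, Matrix.mul_add, trace_add,
    trace_add, trace_add, trace_symm B A]
  ring

lemma frob_eq_sum {m n : ℕ} (A : Matrix (Fin m) (Fin n) ℝ) :
    trace (Aᵀ * A) = ∑ i, ∑ j, (A i j) ^ 2 := by
  rw [trace_transpose_mul_eq]
  simp only [dotProduct, sq]
  exact Finset.sum_comm

lemma frob_nonneg {m n : ℕ} (A : Matrix (Fin m) (Fin n) ℝ) :
    0 ≤ trace (Aᵀ * A) := by
  rw [frob_eq_sum]; positivity

lemma trace_sandwich_le {m n l : ℕ} (G1 : Matrix (Fin m) (Fin n) ℝ)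
    (hG1 : ∀ x : Fin n → ℝ, (G1 *ᵥ x) ⬝ᵥ (G1 *ᵥ x) ≤ x ⬝ᵥ x)
    (U : Matrix (Fin m) (Fin l) ℝ) (V : Matrix (Fin n) (Fin l) ℝ)
    (hU : Uᵀ * U = 1) (hV : Vᵀ * V = 1)
    (d : Fin l → ℝ) (hd0 : ∀ i, 0 ≤ d i) :
    trace (G1ᵀ * (U * diagonal d * Vᵀ)) ≤ ∑ i, d i := by
  -- rewrite the trace as a sum over i of ((G1 V)ᵀ U)_{ii} * d i
  have e1 : trace (G1ᵀ * (U * diagonal d * Vᵀ))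
      = ∑ i, ((G1 * V)ᵀ * U) i i * d i := by
    have h : G1ᵀ * (U * diagonal d * Vᵀ) = (G1ᵀ * U * diagonal d) * Vᵀ := by
      simp only [Matrix.mul_assoc]
    rw [h, trace_mul_comm]
    have h2 : Vᵀ * (G1ᵀ * U * diagonal d) = ((G1 * V)ᵀ * U) * diagonal d := by
      rw [transpose_mul]; simp only [Matrix.mul_assoc]
    rw [h2]
    unfold trace
    refine Finset.sum_congr rfl fun i _ => ?_
    show ((G1 * V)ᵀ * U * diagonal d) i i = _
    rw [mul_diagonal]
  rw [e1]
  refine Finset.sum_le_sum fun i _ => ?_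
  have hentry : ((G1 * V)ᵀ * U) i i = (G1 *ᵥ fun k => V k i) ⬝ᵥ (fun k => U k i) := by
    rw [entry_transpose_mul, col_mul]
  have hv : (fun k => V k i) ⬝ᵥ (fun k => V k i) = 1 := by
    rw [← entry_transpose_mul V V i i, hV, one_apply_eq]
  have hu : (fun k => U k i) ⬝ᵥ (fun k => U k i) = 1 := by
    rw [← entry_transpose_mul U U i i, hU, one_apply_eq]
  have hb : ((G1 * V)ᵀ * U) i i ≤ 1 := by
    rw [hentry]
    calc (G1 *ᵥ fun k => V k i) ⬝ᵥ (fun k => U k i)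
        ≤ Real.sqrt ((G1 *ᵥ fun k => V k i) ⬝ᵥ (G1 *ᵥ fun k => V k i)) *
          Real.sqrt ((fun k => U k i) ⬝ᵥ (fun k => U k i)) := dot_le_sqrt _ _
      _ ≤ 1 := by
          rw [hu, Real.sqrt_one, mul_one]
          calc Real.sqrt ((G1 *ᵥ fun k => V k i) ⬝ᵥ (G1 *ᵥ fun k => V k i))
              ≤ Real.sqrt ((fun k => V k i) ⬝ᵥ (fun k => V k i)) :=
                Real.sqrt_le_sqrt (hG1 _)
            _ = 1 := by rw [hv, Real.sqrt_one]
  calc ((G1 * V)ᵀ * U) i i * d i ≤ 1 * d i :=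
        mul_le_mul_of_nonneg_right hb (hd0 i)
    _ = d i := one_mul _

end SVTAux

/-- **Singular value thresholding solves the nuclear-norm proximal problem**
(Theorem 2.1 of Cai–Candès–Shen). If `Z = U Σ Vᵀ` is an SVD of `Z` with `U, V`
having orthonormal columns and strictly positive singular values `σ i`, then
for `λ > 0`, the matrix `D_λ(Z) = U diag((σ i - λ)₊) Vᵀ` is the unique minimizer
of `X ↦ ‖X‖_* + (1 / (2λ)) ‖X - Z‖_F²`, i.e. `D_λ(Z) = prox_{λ‖·‖_*}(Z)`. -/
theorem svt_is_prox_of_nuclearNorm (m n l : ℕ)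
    (Z : Matrix (Fin m) (Fin n) ℝ)
    (U : Matrix (Fin m) (Fin l) ℝ) (V : Matrix (Fin n) (Fin l) ℝ)
    (σ : Fin l → ℝ) (hσ : ∀ i, 0 < σ i)
    (hU : Uᵀ * U = 1) (hV : Vᵀ * V = 1)
    (hZ : Z = U * Matrix.diagonal σ * Vᵀ)
    (lam : ℝ) (hlam : 0 < lam) :
    let f : Matrix (Fin m) (Fin n) ℝ → ℝ := fun X =>
      nuclearNorm X + (1 / (2 * lam)) * ∑ i, ∑ j, (X i j - Z i j) ^ 2
    let D : Matrix (Fin m) (Fin n) ℝ :=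
      U * Matrix.diagonal (fun i => max 0 (σ i - lam)) * Vᵀ
    (∀ X, f D ≤ f X) ∧ (∀ X, (∀ Y, f X ≤ f Y) → X = D) := by
  intro f D
  set d : Fin l → ℝ := fun i => max 0 (σ i - lam) with hd
  set g : Fin l → ℝ := fun i => min (σ i) lam / lam with hg
  have hDval : D = U * Matrix.diagonal d * Vᵀ := rfl
  have hfval : ∀ X, f X
      = nuclearNorm X + (1 / (2 * lam)) * ∑ i, ∑ j, (X i j - Z i j) ^ 2 :=
    fun X => rfl
  have hd0 : ∀ i, 0 ≤ d i := fun i => le_max_left _ _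
  have hg0 : ∀ i, 0 ≤ g i := fun i =>
    div_nonneg (le_min (hσ i).le hlam.le) hlam.le
  have hg1 : ∀ i, g i ≤ 1 := fun i => (div_le_one hlam).2 (min_le_right _ _)
  have hgd : ∀ i, g i * d i = d i := by
    intro i
    rcases le_or_gt (σ i) lam with h | h
    · have hdi : d i = 0 := by rw [hd]; exact max_eq_left (sub_nonpos.2 h)
      rw [hdi, mul_zero]
    · have hgi : g i = 1 := by
        rw [hg]; show min (σ i) lam / lam = 1
        rw [min_eq_right h.le, div_self hlam.ne']
      rw [hgi, one_mul]
  have hdg : ∀ i, d i - σ i = (-lam) * g i := by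
    intro i
    rcases le_or_gt (σ i) lam with h | h
    · have hdi : d i = 0 := by rw [hd]; exact max_eq_left (sub_nonpos.2 h)
      have hgi : g i = σ i / lam := by rw [hg]; show min (σ i) lam / lam = _;
                                       rw [min_eq_left h]
      rw [hdi, hgi]; field_simp; ring
    · have hdi : d i = σ i - lam := by rw [hd]; exact max_eq_right (by linarith)
      have hgi : g i = 1 := by
        rw [hg]; show min (σ i) lam / lam = 1
        rw [min_eq_right h.le, div_self hlam.ne']
      rw [hdi, hgi]; ring
  set G0 : Matrix (Fin m) (Fin n) ℝ := U * Matrix.diagonal g * Vᵀ with hG0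
  have hG0sq : G0ᵀ * G0 = V * Matrix.diagonal (fun i => g i * g i) * Vᵀ :=
    SVTAux.sand U V hU g g
  have hG0con : ∀ x : Fin n → ℝ, (G0 *ᵥ x) ⬝ᵥ (G0 *ᵥ x) ≤ x ⬝ᵥ x := by
    intro x
    refine SVTAux.con_of G0 V hV _ (fun i => mul_nonneg (hg0 i) (hg0 i))
      (fun i => ?_) hG0sq x
    nlinarith [hg0 i, hg1 i]
  have tGD : trace (G0ᵀ * D) = ∑ i, d i := by
    rw [hDval, hG0, SVTAux.trace_pair U V hU hV g d]
    exact Finset.sum_congr rfl fun i _ => hgd i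
  have nucD : nuclearNorm D ≤ ∑ i, d i := by
    obtain ⟨G1, hG1con, hG1tr⟩ := SVTAux.exists_dual D
    rw [← hG1tr, hDval]
    exact SVTAux.trace_sandwich_le G1 hG1con U V hU hV d hd0
  have nucX : ∀ X, trace (G0ᵀ * X) ≤ nuclearNorm X :=
    fun X => SVTAux.trace_le_nuclear X G0 hG0con
  -- D - Z = (-lam) • G0
  have hE2 : D - Z = (-lam) • G0 := by
    rw [hDval, hZ]
    have h1 : U * Matrix.diagonal d * Vᵀ - U * Matrix.diagonal σ * Vᵀ
        = U * Matrix.diagonal (fun i => d i - σ i) * Vᵀ := by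
      rw [← diagonal_sub, Matrix.mul_sub, Matrix.sub_mul]
    rw [h1]
    have h2 : Matrix.diagonal (fun i => d i - σ i)
        = (-lam) • Matrix.diagonal g := by
      have hfun : (fun i => d i - σ i) = (-lam) • g :=
        funext fun i => by rw [Pi.smul_apply, smul_eq_mul]; exact hdg i
      rw [hfun, Matrix.diagonal_smul]
    rw [h2, hG0, Matrix.mul_smul, Matrix.smul_mul]
  -- the key inequality
  have key : ∀ X, f D + (1 / (2 * lam)) * trace ((X - D)ᵀ * (X - D)) ≤ f X := by
    intro X
    rw [hfval X, hfval D]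
    have hXZ : ∑ i, ∑ j, (X i j - Z i j) ^ 2 = trace ((X - Z)ᵀ * (X - Z)) := by
      rw [SVTAux.frob_eq_sum]; simp [Matrix.sub_apply]
    have hDZ : ∑ i, ∑ j, (D i j - Z i j) ^ 2 = trace ((D - Z)ᵀ * (D - Z)) := by
      rw [SVTAux.frob_eq_sum]; simp [Matrix.sub_apply]
    rw [hXZ, hDZ]
    have hcross : trace ((X - D)ᵀ * (D - Z))
        = (-lam) * (trace (G0ᵀ * X) - trace (G0ᵀ * D)) := by
      rw [hE2, Matrix.mul_smul, trace_smul, smul_eq_mul]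
      congr 1
      rw [SVTAux.trace_symm, Matrix.mul_sub, trace_sub]
    have hsplit : X - Z = (X - D) + (D - Z) := by abel
    have h1 : trace ((X - Z)ᵀ * (X - Z))
        = trace ((X - D)ᵀ * (X - D))
          + 2 * ((-lam) * (trace (G0ᵀ * X) - trace (G0ᵀ * D)))
          + trace ((D - Z)ᵀ * (D - Z)) := by
      rw [hsplit, SVTAux.frob_expand, hcross]
    rw [h1, tGD]
    have hlb : trace (G0ᵀ * X) ≤ nuclearNorm X := nucX X
    set t := trace (G0ᵀ * X) with ht
    set FΔ := trace ((X - D)ᵀ * (X - D)) with hFΔ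
    set FE := trace ((D - Z)ᵀ * (D - Z)) with hFE
    set S := ∑ i, d i with hS
    have expand : (1 / (2 * lam)) * (FΔ + 2 * ((-lam) * (t - S)) + FE)
        = (1 / (2 * lam)) * FΔ + (S - t) + (1 / (2 * lam)) * FE := by
      field_simp
      ring
    rw [expand]
    linarith [nucD, hlb]
  refine ⟨fun X => ?_, fun X hmin => ?_⟩
  · have h := key X
    have h0 : 0 ≤ trace ((X - D)ᵀ * (X - D)) := SVTAux.frob_nonneg _
    have hc : 0 < 1 / (2 * lam) := by positivity
    have hp : 0 ≤ 1 / (2 * lam) * trace ((X - D)ᵀ * (X - D)) := mul_nonneg hc.le h0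
    exact le_trans (le_add_of_nonneg_right hp) h
  · have h1 := key X
    have h2 := hmin D
    have hc : 0 < 1 / (2 * lam) := by positivity
    have h0 : 0 ≤ trace ((X - D)ᵀ * (X - D)) := SVTAux.frob_nonneg _
    have hp : 1 / (2 * lam) * trace ((X - D)ᵀ * (X - D)) ≤ 0 :=
      (add_le_iff_nonpos_right _).1 (h1.trans h2)
    have h3 : trace ((X - D)ᵀ * (X - D)) = 0 := by
      rcases h0.lt_or_eq with hlt | heq
      · exact absurd hp (not_le.2 (mul_pos hc hlt))
      · exact heq.symm
    have h4 : ∑ i, ∑ j, ((X - D) i j) ^ 2 = 0 := by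
      rw [← SVTAux.frob_eq_sum]; exact h3
    ext i j
    have h5 : ∀ i ∈ (univ : Finset (Fin m)), (0:ℝ) ≤ ∑ j, ((X - D) i j) ^ 2 :=
      fun i _ => by positivity
    have h6 := (Finset.sum_eq_zero_iff_of_nonneg h5).1 h4 i (mem_univ i)
    have h7 := (Finset.sum_eq_zero_iff_of_nonneg
      (fun j _ => sq_nonneg ((X - D) i j))).1 h6 j (mem_univ j)
    have h8 : (X - D) i j = 0 := by
      exact sq_eq_zero_iff.1 h7
    simpa [Matrix.sub_apply, sub_eq_zero] using h8
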